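/- Let K be a field and f(x) a doubly monic polynomial of degree n > 3 over K with f(1) ≠ 0. Then f is 2-regular over K if and only if there is no polynomial g(x) of degree 2 with coefficients in an algebraic closure of K dividing both f(x) and its signed reciprocal f*(x). -/

import Mathlib

open Polynomial

/-- `f` is `k`-regular over `K`: no product of `k` roots of `f` (with distinct
indices, counting multiplicity) in an algebraic closure of `K` equals `1`. -/
def kRegular (K : Type*) [Field K] (f : Polynomial K) (k : ℕ) : Prop :=
  ∀ s : Multiset (AlgebraicClosure K),
    s ≤ (f.map (algebraMap K (AlgebraicClosure K))).roots →
    Multiset.card s = k → s.prod ≠ 1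

/-- The signed reciprocal polynomial `f*(t) = (-1)^n t^n f(t⁻¹)` of a (doubly monic)
polynomial of degree `n`. -/
noncomputable def signedReciprocal {R : Type*} [CommRing R] (f : Polynomial R) : Polynomial R :=
  (-1 : Polynomial R) ^ f.natDegree * f.reverse

/-!
Over an algebraically closed field a polynomial is determined up to a unit by its multiset of
roots, and since `f(0) ≠ 0` the roots of `f*` are the inverses of the roots of `f`. So a common
quadratic factor of `f` and `f*` is the same as a pair `{a, b}` of roots of `f` whose inverses
are again roots. A pair `{a, a⁻¹}` of roots is such a pair. Conversely, if `a` or `b` differs from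
its inverse, say `c`, then `{c, c⁻¹}` is a pair of roots with product `1`; otherwise both are
self-inverse, hence equal to `-1` because `1` is not a root, and `{a, b} = {-1, -1}` itself has
product `1`.
-/

namespace Polynomial

lemma reverse_multiset_prod {R : Type*} [CommSemiring R] [NoZeroDivisors R]
    (s : Multiset R[X]) : s.prod.reverse = (s.map reverse).prod := by
  induction s using Multiset.induction_on with
  | empty => simpa using reverse_C (1 : R)
  | cons p s ih => simp [reverse_mul_of_domain, ih]

lemma reverse_X_sub_C_of_ne_zero {A : Type*} [Field A] {a : A} (ha : a ≠ 0) :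
    (X - C a).reverse = C (-a) * (X - C a⁻¹) := by
  rw [reverse, natDegree_X_sub_C, reflect_sub, reflect_one_X, reflect_C, pow_one, mul_sub,
    ← C_mul, neg_mul, mul_inv_cancel₀ ha, map_neg, map_neg, map_one]
  ring

lemma zero_notMem_roots_of_coeff_zero_ne_zero {R : Type*} [CommRing R] [IsDomain R] {p : R[X]}
    (h0 : p.coeff 0 ≠ 0) : (0 : R) ∉ p.roots := fun h =>
  h0 (by simpa [coeff_zero_eq_eval_zero] using isRoot_of_mem_roots h)

lemma roots_reverse_of_monic {A : Type*} [Field A] [IsAlgClosed A] {p : A[X]} (hp : p.Monic)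
    (h0 : p.coeff 0 ≠ 0) : p.reverse.roots = p.roots.map (·⁻¹) := by
  have hroots := zero_notMem_roots_of_coeff_zero_ne_zero h0
  have hfactor : ∀ a ∈ p.roots, (X - C a).reverse = C (-a) * (X - C a⁻¹) := fun a ha =>
    reverse_X_sub_C_of_ne_zero (ne_of_mem_of_not_mem ha hroots)
  have hC : (p.roots.map fun a => C (-a)).prod = C (p.roots.map (-·)).prod := by
    rw [map_multiset_prod, Multiset.map_map]; rfl
  have hC0 : (p.roots.map (-·)).prod ≠ 0 := Multiset.prod_ne_zero fun h => by
    obtain ⟨a, ha, ha0⟩ := Multiset.mem_map.mp h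
    exact hroots (neg_eq_zero.mp ha0 ▸ ha)
  conv_lhs => rw [(IsAlgClosed.splits p).eq_prod_roots_of_monic hp]
  rw [reverse_multiset_prod, Multiset.map_map, Function.comp_def, Multiset.map_congr rfl hfactor,
    Multiset.prod_map_mul, hC, roots_C_mul _ hC0]
  simpa [Multiset.map_map] using roots_multiset_prod_X_sub_C (p.roots.map (·⁻¹))

lemma exists_degree_eq_dvd_dvd_iff {A : Type*} [Field A] [IsAlgClosed A] {p q : A[X]}
    (hp : p ≠ 0) (hq : q ≠ 0) (k : ℕ) :
    (∃ g : A[X], g.degree = k ∧ g ∣ p ∧ g ∣ q) ↔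
      ∃ s : Multiset A, Multiset.card s = k ∧ s ≤ p.roots ∧ s ≤ q.roots := by
  constructor
  · rintro ⟨g, hdeg, hgp, hgq⟩
    have hg : g ≠ 0 := fun h => by simp [h] at hdeg
    refine ⟨g.roots, ?_, (IsAlgClosed.dvd_iff_roots_le_roots hg hp).mp hgp,
      (IsAlgClosed.dvd_iff_roots_le_roots hg hq).mp hgq⟩
    rw [IsAlgClosed.card_roots_eq_natDegree, natDegree_eq_of_degree_eq_some hdeg]
  · rintro ⟨s, hcard, hsp, hsq⟩
    refine ⟨(s.map fun a => X - C a).prod, ?_,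
      (Multiset.prod_X_sub_C_dvd_iff_le_roots hp s).mpr hsp,
      (Multiset.prod_X_sub_C_dvd_iff_le_roots hq s).mpr hsq⟩
    rw [degree_eq_natDegree (monic_multiset_prod_of_monic _ _ fun a _ => monic_X_sub_C a).ne_zero,
      natDegree_multiset_prod_X_sub_C_eq_card, hcard]

end Polynomial

namespace Multiset

lemma pair_le_of_ne {α : Type*} {a b : α} {s : Multiset α} (hab : a ≠ b) (ha : a ∈ s)
    (hb : b ∈ s) : ({a, b} : Multiset α) ≤ s :=
  (le_iff_subset (nodup_cons.mpr ⟨by simpa using hab, nodup_singleton b⟩)).mpr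
    (cons_subset.mpr ⟨ha, singleton_subset.mpr hb⟩)

lemma exists_pair_prod_eq_one_iff {A : Type*} [Field A] {S : Multiset A} (h0 : (0 : A) ∉ S)
    (h1 : (1 : A) ∉ S) :
    (∃ s ≤ S, card s = 2 ∧ s.prod = 1) ↔
      ∃ s, card s = 2 ∧ s ≤ S ∧ s ≤ S.map (·⁻¹) := by
  constructor
  · rintro ⟨s, hsS, hcard, hprod⟩
    obtain ⟨a, b, rfl⟩ := card_eq_two.mp hcard
    have hb : b = a⁻¹ := eq_inv_of_mul_eq_one_right (by simpa using hprod)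
    have hinv : ({a, b} : Multiset A).map (·⁻¹) = {a, b} := by
      simpa [hb] using pair_comm a⁻¹ a
    exact ⟨{a, b}, hcard, hsS, hinv ▸ map_le_map hsS⟩
  · rintro ⟨s, hcard, hsS, hsInv⟩
    obtain ⟨a, b, rfl⟩ := card_eq_two.mp hcard
    have hmem : ∀ c ∈ ({a, b} : Multiset A), c ∈ S ∧ c⁻¹ ∈ S := fun c hc => by
      obtain ⟨d, hd, rfl⟩ := mem_map.mp (mem_of_le hsInv hc)
      exact ⟨mem_of_le hsS hc, by simpa using hd⟩
    have of_ne_inv : ∀ c ∈ ({a, b} : Multiset A), c ≠ c⁻¹ →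
        ∃ s ≤ S, card s = 2 ∧ s.prod = 1 := fun c hc hne =>
      ⟨{c, c⁻¹}, pair_le_of_ne hne (hmem c hc).1 (hmem c hc).2, rfl,
        by simpa using mul_inv_cancel₀ (ne_of_mem_of_not_mem (hmem c hc).1 h0)⟩
    have eq_neg_one : ∀ c ∈ ({a, b} : Multiset A), c = c⁻¹ → c = -1 := fun c hc hc' => by
      have := (hmem c hc).1
      rcases self_eq_inv₀.mp hc' with h | rfl | rfl <;> first | exact h | contradiction
    by_cases ha : a = a⁻¹
    · by_cases hb : b = b⁻¹
      · refine ⟨{a, b}, hsS, rfl, ?_⟩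
        simp [eq_neg_one a (by simp) ha, eq_neg_one b (by simp) hb]
      · exact of_ne_inv b (by simp) hb
    · exact of_ne_inv a (by simp) ha

end Multiset

lemma map_signedReciprocal {R S : Type*} [CommRing R] [CommRing S] {φ : R →+* S}
    (hφ : Function.Injective φ) (p : R[X]) :
    (signedReciprocal p).map φ = signedReciprocal (p.map φ) := by
  simp [signedReciprocal, reverse, reflect_map, natDegree_map_eq_of_injective hφ]

lemma signedReciprocal_ne_zero {R : Type*} [CommRing R] {p : R[X]} (hp : p ≠ 0) :
    signedReciprocal p ≠ 0 := by
  rw [Ne, signedReciprocal, ((isUnit_neg_one (α := R[X])).pow _).mul_right_eq_zero,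
    reverse_eq_zero]
  exact hp

lemma roots_signedReciprocal {R : Type*} [CommRing R] [IsDomain R] (p : R[X]) :
    (signedReciprocal p).roots = p.reverse.roots := by
  rw [signedReciprocal, ← C_1, ← C_neg, ← C_pow,
    roots_C_mul _ (pow_ne_zero _ (neg_ne_zero.mpr one_ne_zero))]

theorem twoRegular_iff_no_common_quadratic_factor_general {K : Type*} [Field K] (f : Polynomial K)
    (n : ℕ) (hmonic : f.Monic) (hdm : f.coeff 0 = (-1) ^ n)
    (h1 : f.eval 1 ≠ 0) :
    kRegular K f 2 ↔
      ¬ ∃ g : Polynomial (AlgebraicClosure K), g.degree = 2 ∧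
        g ∣ f.map (algebraMap K (AlgebraicClosure K)) ∧
        g ∣ (signedReciprocal f).map (algebraMap K (AlgebraicClosure K)) := by
  rw [map_signedReciprocal (algebraMap K _).injective]
  set F := f.map (algebraMap K (AlgebraicClosure K))
  have hF : F.Monic := hmonic.map _
  have hF0 : F.coeff 0 ≠ 0 := by simp [F, hdm]
  have h1F : (1 : AlgebraicClosure K) ∉ F.roots := by
    simpa only [F, mem_roots hF.ne_zero, IsRoot.def, eval_one_map, map_eq_zero] using h1
  have hroots : (signedReciprocal F).roots = F.roots.map (·⁻¹) := by
    rw [roots_signedReciprocal, roots_reverse_of_monic hF hF0]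
  rw [show (2 : WithBot ℕ) = (2 : ℕ) from rfl,
    exists_degree_eq_dvd_dvd_iff hF.ne_zero (signedReciprocal_ne_zero hF.ne_zero), hroots,
    ← Multiset.exists_pair_prod_eq_one_iff (zero_notMem_roots_of_coeff_zero_ne_zero hF0) h1F]
  simp [kRegular, F]

theorem twoRegular_iff_no_common_quadratic_factor {K : Type*} [Field K] (f : Polynomial K)
    (n : ℕ) (hmonic : f.Monic) (hdeg : f.natDegree = n) (hdm : f.coeff 0 = (-1) ^ n)
    (hn : 3 < n) (h1 : f.eval 1 ≠ 0) :
    kRegular K f 2 ↔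
      ¬ ∃ g : Polynomial (AlgebraicClosure K), g.degree = 2 ∧
        g ∣ f.map (algebraMap K (AlgebraicClosure K)) ∧
        g ∣ (signedReciprocal f).map (algebraMap K (AlgebraicClosure K)) :=
  twoRegular_iff_no_common_quadratic_factor_general f n hmonic hdm h1
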